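/- Exponential convergence implies finite expected stopping time of the right order: suppose S(n) is a stochastic process such that for every ε > 0, Σ_{n≥1} P(S(n) ≤ n(I−ε)) < ∞ for some constant I > 0. Define for c > 0 the stopping time T_c = inf{n ≥ 1 : S(n) ≥ c}. Then E[T_c] < ∞ for every c, and limsup_{c→∞} E[T_c]/(c/I) ≤ 1. -/

import Mathlib

open MeasureTheory Filter
open scoped ENNReal

lemma pointwise_bound {Ω : Type*} (S : ℕ → Ω → ℝ) (c : ℝ) (m : ℕ) (hm : 1 ≤ m) (ω : Ω) :
    (⨅ (n : ℕ) (_ : 1 ≤ n ∧ c ≤ S n ω), (n : ℝ≥0∞)) ≤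
      (m : ℝ≥0∞) + ∑' j : ℕ, Set.indicator {ω | S (m + j) ω < c} (fun _ => (1:ℝ≥0∞)) ω := by
  by_cases h : ∃ j : ℕ, c ≤ S (m + j) ω
  · set j₀ := Nat.find h with hj₀
    have hspec := Nat.find_spec h
    have h1 : (⨅ (n : ℕ) (_ : 1 ≤ n ∧ c ≤ S n ω), (n : ℝ≥0∞)) ≤ ((m + j₀ : ℕ) : ℝ≥0∞) :=
      iInf₂_le (m + j₀) ⟨by omega, hspec⟩
    refine h1.trans ?_
    push_cast
    gcongr
    have : ∀ i ∈ Finset.range j₀,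
        Set.indicator {ω | S (m + i) ω < c} (fun _ => (1:ℝ≥0∞)) ω = 1 := by
      intro i hi
      rw [Set.indicator_of_mem]
      exact lt_of_not_ge (Nat.find_min h (Finset.mem_range.mp hi))
    calc (j₀ : ℝ≥0∞) = ∑ i ∈ Finset.range j₀,
          Set.indicator {ω | S (m + i) ω < c} (fun _ => (1:ℝ≥0∞)) ω := by
          rw [Finset.sum_congr rfl this]; simp
      _ ≤ _ := ENNReal.sum_le_tsum _
  · push_neg at h
    have : ∀ j : ℕ, Set.indicator {ω | S (m + j) ω < c} (fun _ => (1:ℝ≥0∞)) ω = 1 := fun j =>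
      Set.indicator_of_mem (show ω ∈ {ω | S (m + j) ω < c} from h j) _
    rw [tsum_congr this, ENNReal.tsum_const_eq_top_of_ne_zero one_ne_zero]
    exact le_top

lemma integral_bound {Ω : Type*} [MeasurableSpace Ω] (P : Measure Ω) [IsProbabilityMeasure P]
    (S : ℕ → Ω → ℝ) (hS : ∀ n, Measurable (S n)) (c : ℝ) (m : ℕ) (hm : 1 ≤ m)
    (I ε : ℝ) (hε : 0 < ε) (hεI : ε < I) (hc : c ≤ (m : ℝ) * (I - ε)) :
    (∫⁻ ω, ⨅ (n : ℕ) (_ : 1 ≤ n ∧ c ≤ S n ω), (n : ℝ≥0∞) ∂P) ≤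
      (m : ℝ≥0∞) + ∑' n : ℕ, P {ω | S (n + 1) ω ≤ (n + 1 : ℝ) * (I - ε)} := by
  have hmeas : ∀ j : ℕ, MeasurableSet {ω | S (m + j) ω < c} := fun j =>
    measurableSet_lt (hS _) measurable_const
  have step1 : (∫⁻ ω, ⨅ (n : ℕ) (_ : 1 ≤ n ∧ c ≤ S n ω), (n : ℝ≥0∞) ∂P) ≤
      (m : ℝ≥0∞) + ∑' j : ℕ, P {ω | S (m + j) ω < c} := by
    calc (∫⁻ ω, ⨅ (n : ℕ) (_ : 1 ≤ n ∧ c ≤ S n ω), (n : ℝ≥0∞) ∂P)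
        ≤ ∫⁻ ω, ((m : ℝ≥0∞) +
            ∑' j : ℕ, Set.indicator {ω | S (m + j) ω < c} (fun _ => (1:ℝ≥0∞)) ω) ∂P :=
          lintegral_mono (pointwise_bound S c m hm)
      _ = (m : ℝ≥0∞) + ∑' j : ℕ, P {ω | S (m + j) ω < c} := by
          rw [lintegral_add_left measurable_const, lintegral_const, measure_univ, mul_one,
            lintegral_tsum (fun j => ((measurable_const.indicator (hmeas j)).aemeasurable))]
          congr 1
          exact tsum_congr fun j => lintegral_indicator_one (hmeas j)
  refine step1.trans (add_le_add le_rfl ?_)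
  set a : ℕ → ℝ≥0∞ := fun n => P {ω | S (n + 1) ω ≤ (n + 1 : ℝ) * (I - ε)} with ha
  have hcomp : ∀ j : ℕ, P {ω | S (m + j) ω < c} ≤ a (m - 1 + j) := by
    intro j
    have hidx : m - 1 + j + 1 = m + j := by omega
    rw [ha]
    simp only [hidx]
    refine measure_mono fun ω hω => ?_
    have hle : c ≤ ((m : ℝ) + j) * (I - ε) := by
      refine hc.trans ?_
      have : (0:ℝ) < I - ε := by linarith
      nlinarith [Nat.cast_nonneg (α := ℝ) j]
    have hcast : ((m - 1 + j : ℕ) + 1 : ℝ) = (m : ℝ) + j := by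
      have h2 := congrArg (fun n : ℕ => (n : ℝ)) hidx
      push_cast at h2 ⊢
      linarith
    rw [Set.mem_setOf_eq, hcast]
    exact le_of_lt (lt_of_lt_of_le hω hle)
  calc (∑' j : ℕ, P {ω | S (m + j) ω < c}) ≤ ∑' j : ℕ, a (m - 1 + j) :=
        ENNReal.tsum_le_tsum hcomp
    _ ≤ ∑' n : ℕ, a n :=
        ENNReal.tsum_comp_le_tsum_of_injective (add_right_injective (m - 1)) a

/-- Exponential (complete) convergence implies finite expected stopping time of
the right order: if Σₙ P(S(n) ≤ n(I−ε)) < ∞ for every ε > 0 with I > 0, then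
the stopping time T_c = inf{n ≥ 1 : S(n) ≥ c} has finite expectation for every
c > 0, and limsup_{c→∞} E[T_c]/(c/I) ≤ 1. (Here E[T_c] is expressed as the
lower Lebesgue integral of the extended-valued first hitting time.) -/
theorem expected_stopping_time_upper_bound
    {Ω : Type*} [MeasurableSpace Ω] (P : Measure Ω) [IsProbabilityMeasure P]
    (S : ℕ → Ω → ℝ) (hS : ∀ n, Measurable (S n))
    (I : ℝ) (hI : 0 < I)
    (hsum : ∀ ε : ℝ, 0 < ε →
      (∑' n : ℕ, P {ω | S (n + 1) ω ≤ (n + 1 : ℝ) * (I - ε)}) < ⊤) :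
    (∀ c : ℝ, 0 < c →
      (∫⁻ ω, ⨅ (n : ℕ) (_ : 1 ≤ n ∧ c ≤ S n ω), (n : ℝ≥0∞) ∂P) < ⊤) ∧
    limsup (fun c : ℝ =>
        (∫⁻ ω, ⨅ (n : ℕ) (_ : 1 ≤ n ∧ c ≤ S n ω), (n : ℝ≥0∞) ∂P) /
          ENNReal.ofReal (c / I)) atTop ≤ 1 := by
  constructor
  · -- finiteness
    intro c hc
    have hε : (0:ℝ) < I/2 := by linarith
    set m : ℕ := ⌈c / (I/2)⌉₊ + 1 with hmdef
    have hm : 1 ≤ m := Nat.le_add_left 1 _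
    have hmc : c ≤ (m : ℝ) * (I - I/2) := by
      have h1 : c / (I/2) ≤ (m : ℝ) := by
        have := Nat.le_ceil (c / (I/2))
        push_cast [hmdef]
        linarith
      have : I - I/2 = I/2 := by ring
      rw [this]
      calc c = (c / (I/2)) * (I/2) := by field_simp
        _ ≤ (m : ℝ) * (I/2) := by
            apply mul_le_mul_of_nonneg_right h1 (le_of_lt hε)
    refine lt_of_le_of_lt
      (integral_bound P S hS c m hm I (I/2) hε (by linarith) hmc) ?_
    exact ENNReal.add_lt_top.mpr ⟨ENNReal.natCast_lt_top m, hsum (I/2) hε⟩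
  · -- limsup
    refine le_of_forall_gt_imp_ge_of_dense fun b hb => ?_
    rcases eq_or_ne b ⊤ with rfl | hbt
    · exact le_top
    set b' : ℝ := b.toReal with hb'def
    have hb1 : 1 < b' := by
      have := (ENNReal.toReal_lt_toReal (by simp) hbt).mpr hb
      simpa using this
    set r : ℝ := (1 + b')/2 with hrdef
    have hr1 : 1 < r := by rw [hrdef]; linarith
    have hrb : r < b' := by rw [hrdef]; linarith
    have hr0 : 0 < r := by linarith
    set ε : ℝ := I - I/r with hεdef
    have hIr : 0 < I/r := div_pos hI hr0
    have hIrI : I/r < I := by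
      rw [div_lt_iff₀ hr0]
      nlinarith
    have hε : 0 < ε := by rw [hεdef]; linarith
    have hεI : ε < I := by rw [hεdef]; linarith
    have hIε : I - ε = I/r := by rw [hεdef]; ring
    set K : ℝ≥0∞ := ∑' n : ℕ, P {ω | S (n + 1) ω ≤ (n + 1 : ℝ) * (I - ε)} with hKdef
    have hK : K < ⊤ := hsum ε hε
    set δ : ℝ≥0∞ := ENNReal.ofReal (b' - r) with hδdef
    have hδ0 : δ ≠ 0 := by
      simp [hδdef, ENNReal.ofReal_eq_zero]
      linarith
    have hδt : δ ≠ ⊤ := ENNReal.ofReal_ne_top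
    have h2K : (2 : ℝ≥0∞) + K ≠ ⊤ := by
      exact ENNReal.add_ne_top.mpr ⟨by simp, hK.ne⟩
    have hquot_fin : (2 + K)/δ < ⊤ := ENNReal.div_lt_top h2K hδ0
    set A : ℝ := ((2 + K)/δ).toReal with hAdef
    refine limsup_le_of_le (by isBoundedDefault) ?_
    filter_upwards [Filter.eventually_ge_atTop (max 1 (I * (A + 1)))] with c hcge
    have hc1 : (1:ℝ) ≤ c := le_trans (le_max_left _ _) hcge
    have hcpos : 0 < c := by linarith
    have hcA : I * (A + 1) ≤ c := le_trans (le_max_right _ _) hcge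
    -- the integral bound
    set m : ℕ := ⌈c / (I/r)⌉₊ + 1 with hmdef
    have hm : 1 ≤ m := Nat.le_add_left 1 _
    have hmc : c ≤ (m : ℝ) * (I - ε) := by
      rw [hIε]
      have h1 : c / (I/r) ≤ (m : ℝ) := by
        have := Nat.le_ceil (c / (I/r))
        push_cast [hmdef]
        linarith
      calc c = (c / (I/r)) * (I/r) := by field_simp
        _ ≤ (m : ℝ) * (I/r) := mul_le_mul_of_nonneg_right h1 (le_of_lt hIr)
    have hEle : (∫⁻ ω, ⨅ (n : ℕ) (_ : 1 ≤ n ∧ c ≤ S n ω), (n : ℝ≥0∞) ∂P) ≤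
        ENNReal.ofReal (c / (I/r)) + (2 + K) := by
      refine (integral_bound P S hS c m hm I ε hε hεI hmc).trans ?_
      have hmle : (m : ℝ≥0∞) ≤ ENNReal.ofReal (c / (I/r)) + 2 := by
        have hx0 : (0:ℝ) ≤ c / (I/r) := le_of_lt (div_pos hcpos hIr)
        have h2 : (m : ℝ) ≤ c / (I/r) + 2 := by
          have := Nat.ceil_lt_add_one hx0
          push_cast [hmdef]
          linarith
        calc (m : ℝ≥0∞) = ENNReal.ofReal (m : ℝ) := by
              simp [ENNReal.ofReal_natCast]
          _ ≤ ENNReal.ofReal (c / (I/r) + 2) := ENNReal.ofReal_le_ofReal h2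
          _ = ENNReal.ofReal (c / (I/r)) + 2 := by
              rw [ENNReal.ofReal_add hx0 (by norm_num)]
              norm_num
      calc (m : ℝ≥0∞) + K ≤ (ENNReal.ofReal (c / (I/r)) + 2) + K :=
            add_le_add_left hmle K
        _ = ENNReal.ofReal (c / (I/r)) + (2 + K) := by ring
    -- divide
    set D : ℝ≥0∞ := ENNReal.ofReal (c / I) with hDdef
    have hcI : 0 < c / I := div_pos hcpos hI
    have hD0 : D ≠ 0 := by
      simp [hDdef, ENNReal.ofReal_eq_zero]
      linarith
    have hDt : D ≠ ⊤ := ENNReal.ofReal_ne_top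
    have hfirst : ENNReal.ofReal (c / (I/r)) / D = ENNReal.ofReal r := by
      rw [hDdef, ← ENNReal.ofReal_div_of_pos hcI]
      congr 1
      field_simp
    have hDge : (2 + K)/δ ≤ D := by
      have h1 : (2 + K)/δ = ENNReal.ofReal A := by
        rw [hAdef, ENNReal.ofReal_toReal hquot_fin.ne]
      rw [h1, hDdef]
      apply ENNReal.ofReal_le_ofReal
      rw [le_div_iff₀ hI]
      nlinarith
    have hsecond : (2 + K)/D ≤ δ := by
      rw [ENNReal.div_le_iff hD0 hDt]
      calc (2 + K) = δ * ((2 + K)/δ) := (ENNReal.mul_div_cancel hδ0 hδt).symm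
        _ ≤ δ * D := mul_le_mul_right hDge δ
    calc (∫⁻ ω, ⨅ (n : ℕ) (_ : 1 ≤ n ∧ c ≤ S n ω), (n : ℝ≥0∞) ∂P) / D
        ≤ (ENNReal.ofReal (c / (I/r)) + (2 + K)) / D := ENNReal.div_le_div_right hEle D
      _ = ENNReal.ofReal (c / (I/r)) / D + (2 + K)/D := ENNReal.add_div
      _ ≤ ENNReal.ofReal r + δ := add_le_add hfirst.le hsecond
      _ = ENNReal.ofReal b' := by
          rw [hδdef, ← ENNReal.ofReal_add (le_of_lt hr0) (by linarith)]
          ring_nf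
      _ = b := ENNReal.ofReal_toReal hbt
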